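/- arXiv:1803.07678 — 11 statements merged into one kernel-verified Lean document; each statement's English description precedes it below -/
import Mathlib

section
/- In a Hom-group, the inverse of any element is unique: if a*g = 1 and g*b = 1 for elements a, b, g, then a = b; moreover any two right inverses of g are equal and any two left inverses of g are equal. -/
/-- A Hom-group: a set `G` with a bijective twisting map `α` (given as an `Equiv`),
a binary operation `mul`, and a distinguished unit `one`, satisfying Hom-associativity,
multiplicativity of `α`, Hom-unitality, and existence of two-sided inverses. -/
structure HomGroup (G : Type*) where
  mul : G → G → G
  one : G
  α : G ≃ G
  hom_assoc : ∀ g h k, mul (α g) (mul h k) = mul (mul g h) (α k)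
  α_mul : ∀ g k, α (mul g k) = mul (α g) (α k)
  mul_one : ∀ g, mul g one = α g
  one_mul : ∀ g, mul one g = α g
  α_one : α one = one
  inv : G → G
  mul_inv : ∀ g, mul g (inv g) = one
  inv_mul : ∀ g, mul (inv g) g = one

/-! Hom-associativity gives `α (α a) = α a (g b) = (a g) α b = α (α b)` whenever `a g = 1 = g b`,
and `α` is injective; the uniqueness of one-sided inverses follows by comparing each with `g⁻¹`. -/

namespace HomGroup

variable {G : Type*} (H : HomGroup G)

theorem left_inv_eq_right_inv {a b c : G} (hba : H.mul b a = H.one) (hac : H.mul a c = H.one) :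
    b = c := by
  have hαα : H.α (H.α b) = H.α (H.α c) :=
    calc H.α (H.α b) = H.mul (H.α b) H.one := (H.mul_one _).symm
      _ = H.mul (H.α b) (H.mul a c) := by rw [hac]
      _ = H.mul (H.mul b a) (H.α c) := H.hom_assoc b a c
      _ = H.mul H.one (H.α c) := by rw [hba]
      _ = H.α (H.α c) := H.one_mul _
  exact H.α.injective (H.α.injective hαα)

theorem right_inv_unique {g a b : G} (ha : H.mul g a = H.one) (hb : H.mul g b = H.one) :
    a = b :=
  (H.left_inv_eq_right_inv (H.inv_mul g) ha).symm.trans (H.left_inv_eq_right_inv (H.inv_mul g) hb)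

theorem left_inv_unique {g a b : G} (ha : H.mul a g = H.one) (hb : H.mul b g = H.one) :
    a = b :=
  (H.left_inv_eq_right_inv ha (H.mul_inv g)).trans (H.left_inv_eq_right_inv hb (H.mul_inv g)).symm

end HomGroup

/-- Uniqueness of inverses in a Hom-group: a left inverse and a right inverse of `g`
agree; moreover any two right inverses of `g` are equal and any two left inverses
of `g` are equal. -/
theorem homGroup_inverse_unique {G : Type*} (H : HomGroup G) (g : G) :
    (∀ a b, H.mul a g = H.one → H.mul g b = H.one → a = b) ∧
    (∀ a b, H.mul g a = H.one → H.mul g b = H.one → a = b) ∧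
    (∀ a b, H.mul a g = H.one → H.mul b g = H.one → a = b) :=
  ⟨fun _ _ => H.left_inv_eq_right_inv, fun _ _ => H.right_inv_unique,
    fun _ _ => H.left_inv_unique⟩
end

section
/- In a Hom-group (G, α), for all a, b ∈ G the element b⁻¹a⁻¹ is a two-sided inverse of ab, i.e. (ab)(b⁻¹a⁻¹) = 1 and (b⁻¹a⁻¹)(ab) = 1. -/
/-! Since `α` is injective and fixes `1`, it suffices to show `α((ab)(cd)) = 1`. Applying `α` once
supplies exactly the twist that Hom-associativity needs to regroup `(ab)(cd)` as
`α²a · ((bc) · αd)`, so the inner product `bc = 1` collapses and leaves `α²(ad)`. -/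

namespace HomGroup

variable {G : Type*} (H : HomGroup G)

theorem α_mul_mul_mul (a b c d : G) :
    H.α (H.mul (H.mul a b) (H.mul c d)) = H.mul (H.α (H.α a)) (H.mul (H.mul b c) (H.α d)) := by
  rw [H.α_mul, H.α_mul, ← H.hom_assoc, H.hom_assoc b c d]

theorem α_mul_mul_mul_of_mul_eq_one {a b c d : G} (hbc : H.mul b c = H.one) :
    H.α (H.mul (H.mul a b) (H.mul c d)) = H.α (H.α (H.mul a d)) := by
  rw [α_mul_mul_mul, hbc, H.one_mul, H.α_mul, H.α_mul]

theorem eq_one_of_α_eq_one {x : G} (hx : H.α x = H.one) : x = H.one :=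
  H.α.injective (hx.trans H.α_one.symm)

theorem mul_mul_mul_eq_one {a b c d : G} (hbc : H.mul b c = H.one) (had : H.mul a d = H.one) :
    H.mul (H.mul a b) (H.mul c d) = H.one :=
  H.eq_one_of_α_eq_one <| by
    rw [α_mul_mul_mul_of_mul_eq_one H hbc, had, H.α_one, H.α_one]

end HomGroup

/-- In a Hom-group, `b⁻¹ a⁻¹` is a two-sided inverse of `a b`. -/
theorem homGroup_mul_inv_rev {G : Type*} (H : HomGroup G) (a b : G) :
    H.mul (H.mul a b) (H.mul (H.inv b) (H.inv a)) = H.one ∧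
    H.mul (H.mul (H.inv b) (H.inv a)) (H.mul a b) = H.one :=
  ⟨H.mul_mul_mul_eq_one (H.mul_inv b) (H.mul_inv a),
    H.mul_mul_mul_eq_one (H.inv_mul a) (H.inv_mul b)⟩
end

section
/- Every Hom-group (G, α) is a quasigroup: for all a, b ∈ G there exist unique x, y ∈ G with a x = b and y a = b. Explicitly x = α⁻¹(a⁻¹) α⁻²(b) and y = α⁻²(b) α⁻¹(a⁻¹). -/
/-!
Hom-associativity turns a cancellation `a⁻¹ (a x)` into `(a⁻¹ a) α(x) = 1 α(x) = α²(x)`,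
so left and right multiplication are injective, each up to the bijection `α²`. Applying
Hom-associativity to `α⁻¹(a)`, `α⁻¹(a⁻¹)`, `α⁻²(b)` and using that `α⁻¹` is multiplicative
shows the same way that the stated elements solve the equations.
-/

namespace HomGroup

variable {G : Type*} (H : HomGroup G)

theorem symm_mul (g k : G) : H.α.symm (H.mul g k) = H.mul (H.α.symm g) (H.α.symm k) := by
  apply H.α.injective
  rw [H.α_mul, H.α.apply_symm_apply, H.α.apply_symm_apply, H.α.apply_symm_apply]

theorem symm_one : H.α.symm H.one = H.one :=
  H.α.symm_apply_eq.mpr H.α_one.symm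

theorem inv_mul_cancel_left (a x : G) : H.mul (H.α (H.inv a)) (H.mul a x) = H.α (H.α x) := by
  rw [H.hom_assoc, H.inv_mul, H.one_mul]

theorem mul_inv_cancel_right (x a : G) : H.mul (H.mul x a) (H.α (H.inv a)) = H.α (H.α x) := by
  rw [← H.hom_assoc, H.mul_inv, H.mul_one]

theorem mul_inv_cancel_left (a c : G) :
    H.mul a (H.mul (H.α.symm (H.inv a)) c) = H.α (H.α c) := by
  have h := H.hom_assoc (H.α.symm a) (H.α.symm (H.inv a)) c
  rw [H.α.apply_symm_apply] at h
  rw [h, ← H.symm_mul, H.mul_inv, H.symm_one, H.one_mul]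

theorem inv_mul_cancel_right (c a : G) :
    H.mul (H.mul c (H.α.symm (H.inv a))) a = H.α (H.α c) := by
  have h := H.hom_assoc c (H.α.symm (H.inv a)) (H.α.symm a)
  rw [H.α.apply_symm_apply] at h
  rw [← h, ← H.symm_mul, H.inv_mul, H.symm_one, H.mul_one]

theorem mul_right_injective (a : G) : Function.Injective (H.mul a) := by
  intro x y h
  apply H.α.injective.comp H.α.injective
  simp only [Function.comp_apply, ← H.inv_mul_cancel_left a, h]

theorem mul_left_injective (a : G) : Function.Injective (fun y ↦ H.mul y a) := by
  intro x y h
  apply H.α.injective.comp H.α.injective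
  simp only [Function.comp_apply, ← H.mul_inv_cancel_right _ a]
  exact congrArg (H.mul · _) h

end HomGroup

/-- Every Hom-group is a quasigroup: the equations `a x = b` and `y a = b` have
unique solutions, given explicitly by `x = α⁻¹(a⁻¹) α⁻²(b)` and `y = α⁻²(b) α⁻¹(a⁻¹)`. -/
theorem homGroup_quasigroup {G : Type*} (H : HomGroup G) (a b : G) :
    (∃! x, H.mul a x = b) ∧ (∃! y, H.mul y a = b) ∧
    H.mul a (H.mul (H.α.symm (H.inv a)) (H.α.symm (H.α.symm b))) = b ∧
    H.mul (H.mul (H.α.symm (H.α.symm b)) (H.α.symm (H.inv a))) a = b := by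
  have hx : H.mul a (H.mul (H.α.symm (H.inv a)) (H.α.symm (H.α.symm b))) = b := by
    rw [H.mul_inv_cancel_left, H.α.apply_symm_apply, H.α.apply_symm_apply]
  have hy : H.mul (H.mul (H.α.symm (H.α.symm b)) (H.α.symm (H.inv a))) a = b := by
    rw [H.inv_mul_cancel_right, H.α.apply_symm_apply, H.α.apply_symm_apply]
  exact ⟨⟨_, hx, fun x h ↦ H.mul_right_injective a (h.trans hx.symm)⟩,
    ⟨_, hy, fun y h ↦ H.mul_left_injective a (h.trans hy.symm)⟩, hx, hy⟩
end

section
/- The center Z(G) = { x ∈ G : xy = yx for all y ∈ G } of a Hom-group (G, α) is a Hom-subgroup of G: it contains 1, is closed under multiplication, closed under inverses, and closed under α. -/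
/-!
Since `α` is surjective, every element can be written `α w`, and Hom-associativity
`α(g)(hk) = (gh)α(k)` then lets a product of central elements be moved past `α w` one factor at
a time. Left multiplication is injective because `α(a⁻¹)(ab) = α(α b)`, so `x⁻¹` is central once
`α x · (x⁻¹ y)` and `α x · (y x⁻¹)` agree, and both equal `α(α y)` by Hom-associativity.
-/

namespace HomGroup

variable {G : Type*} (H : HomGroup G)

def center : Set G := {x | ∀ y, H.mul x y = H.mul y x}

theorem mul_left_cancel {a b c : G} (h : H.mul a b = H.mul a c) : b = c := by
  have h' : H.mul (H.α (H.inv a)) (H.mul a b) = H.mul (H.α (H.inv a)) (H.mul a c) := by rw [h]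
  rw [H.hom_assoc, H.hom_assoc, H.inv_mul, H.one_mul, H.one_mul] at h'
  exact H.α.injective (H.α.injective h')

theorem mem_center_iff_forall_α {x : G} :
    x ∈ H.center ↔ ∀ w, H.mul x (H.α w) = H.mul (H.α w) x :=
  (H.α.forall_congr_right (q := fun y => H.mul x y = H.mul y x)).symm

theorem one_mem_center : H.one ∈ H.center := fun y => by
  rw [H.one_mul, H.mul_one]

theorem mul_mem_center {x y : G} (hx : x ∈ H.center) (hy : y ∈ H.center) :
    H.mul x y ∈ H.center := by
  rw [mem_center_iff_forall_α]
  intro w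
  calc H.mul (H.mul x y) (H.α w) = H.mul (H.α x) (H.mul y w) := (H.hom_assoc x y w).symm
    _ = H.mul (H.α x) (H.mul w y) := by rw [hy w]
    _ = H.mul (H.mul x w) (H.α y) := H.hom_assoc x w y
    _ = H.mul (H.mul w x) (H.α y) := by rw [hx w]
    _ = H.mul (H.α w) (H.mul x y) := (H.hom_assoc w x y).symm

theorem inv_mem_center {x : G} (hx : x ∈ H.center) : H.inv x ∈ H.center := by
  intro y
  apply H.mul_left_cancel (a := H.α x)
  calc H.mul (H.α x) (H.mul (H.inv x) y)
      = H.mul (H.mul x (H.inv x)) (H.α y) := H.hom_assoc x (H.inv x) y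
    _ = H.α (H.α y) := by rw [H.mul_inv, H.one_mul]
    _ = H.mul (H.α y) (H.mul x (H.inv x)) := by rw [H.mul_inv, H.mul_one]
    _ = H.mul (H.mul y x) (H.α (H.inv x)) := H.hom_assoc y x (H.inv x)
    _ = H.mul (H.mul x y) (H.α (H.inv x)) := by rw [hx y]
    _ = H.mul (H.α x) (H.mul y (H.inv x)) := (H.hom_assoc x y (H.inv x)).symm

theorem α_mem_center {x : G} (hx : x ∈ H.center) : H.α x ∈ H.center := by
  rw [mem_center_iff_forall_α]
  intro w
  rw [← H.α_mul, ← H.α_mul, hx w]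

end HomGroup

/-- The center of a Hom-group is a Hom-subgroup: it contains the unit, and is
closed under multiplication, inversion, and the twisting map. -/
theorem homGroup_center_subgroup {G : Type*} (H : HomGroup G) :
    let Z : Set G := {x | ∀ y, H.mul x y = H.mul y x}
    H.one ∈ Z ∧
    (∀ x ∈ Z, ∀ y ∈ Z, H.mul x y ∈ Z) ∧
    (∀ x ∈ Z, H.inv x ∈ Z) ∧
    (∀ x ∈ Z, H.α x ∈ Z) :=
  ⟨H.one_mem_center, fun _ hx _ hy => H.mul_mem_center hx hy,
    fun _ hx => H.inv_mem_center hx, fun _ hx => H.α_mem_center hx⟩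
end

section
/- In a Hom-group (G, α), if x commutes with every element (x ∈ Z(G)), then so does x⁻¹; i.e. x⁻¹ a = a x⁻¹ for all a ∈ G. -/
namespace HomGroup

variable {G : Type*} (H : HomGroup G)

theorem mul_mul_α_inv (c y : G) : H.mul (H.mul c y) (H.α (H.inv y)) = H.α (H.α c) := by
  rw [← H.hom_assoc, H.mul_inv, H.mul_one]

theorem mul_inv_mul_α (a y : G) : H.mul (H.mul a (H.inv y)) (H.α y) = H.α (H.α a) := by
  rw [← H.hom_assoc, H.inv_mul, H.mul_one]

theorem inv_mul_mul_α_of_commute {a y : G} (hya : H.mul y a = H.mul a y) :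
    H.mul (H.mul (H.inv y) a) (H.α y) = H.α (H.α a) := by
  rw [← H.hom_assoc, ← hya, H.hom_assoc, H.inv_mul, H.one_mul]

theorem mul_right_injective_s6 (y : G) : Function.Injective fun c => H.mul c y := by
  intro d e hde
  have hαα : H.α (H.α d) = H.α (H.α e) := by
    rw [← H.mul_mul_α_inv d y, ← H.mul_mul_α_inv e y]
    exact congrArg (H.mul · (H.α (H.inv y))) hde
  exact H.α.injective (H.α.injective hαα)

end HomGroup

/-- If `x` commutes with every element of a Hom-group, then so does `x⁻¹`. -/
theorem homGroup_inv_central {G : Type*} (H : HomGroup G) (x : G)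
    (hx : ∀ y, H.mul x y = H.mul y x) :
    ∀ a, H.mul (H.inv x) a = H.mul a (H.inv x) := by
  intro a
  exact H.mul_right_injective_s6 (H.α x) <|
    (H.inv_mul_mul_α_of_commute (hx a)).trans (H.mul_inv_mul_α a x).symm
end

section
/- Let (G, α) be a finite Hom-group and H a Hom-subgroup of G. Then for every g ∈ G the left coset gH = { gh : h ∈ H } has the same cardinality as H. -/
namespace HomGroup

variable {G : Type*} (HG : HomGroup G)

theorem α_inv_mul_cancel_left (g h : G) :
    HG.mul (HG.α (HG.inv g)) (HG.mul g h) = HG.α (HG.α h) := by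
  rw [HG.hom_assoc, HG.inv_mul, HG.one_mul]

theorem mul_left_injective_s8 (g : G) : Function.Injective (HG.mul g) := fun h h' hh => by
  have := congrArg (HG.mul (HG.α (HG.inv g))) hh
  rwa [HG.α_inv_mul_cancel_left, HG.α_inv_mul_cancel_left, HG.α.injective.eq_iff,
    HG.α.injective.eq_iff] at this

end HomGroup

theorem homGroup_coset_card_general {G : Type*} (HG : HomGroup G) (H : Set G) :
    ∀ g : G, Set.ncard ((fun h => HG.mul g h) '' H) = Set.ncard H :=
  fun g => Set.ncard_image_of_injective H (HG.mul_left_injective_s8 g)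

/-- In a finite Hom-group, every left coset `gH` of a Hom-subgroup `H` has the
same cardinality as `H`. -/
theorem homGroup_coset_card {G : Type*} [Finite G] (HG : HomGroup G) (H : Set G)
    (h_one : HG.one ∈ H)
    (h_mul : ∀ x ∈ H, ∀ y ∈ H, HG.mul x y ∈ H)
    (h_inv : ∀ x ∈ H, HG.inv x ∈ H)
    (h_α : HG.α '' H = H) :
    ∀ g : G, Set.ncard ((fun h => HG.mul g h) '' H) = Set.ncard H :=
  homGroup_coset_card_general HG H
end

section
/- Let (G, α) be a Hom-group and H a Hom-subgroup with α(H) = H. If two left cosets xH and yH intersect (xH ∩ yH ≠ ∅), then xH = yH. -/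
/-!
Without associativity one cannot cancel directly in `x h₁ = y h₂`, but Hom-associativity
moves the problem one twist further: `α² x = α y · (h₂ h₁⁻¹)`, and then
`(α y · k) · α c = α² y · (k c)` gives `α² x · H ⊆ α² y · H`. Since `α` is bijective,
`α (u H) = α u · H` and the equality of the twisted cosets `α² x · H = α² y · H`
untwists to `x H = y H`.
-/

namespace HomGroup

variable {G : Type*} (HG : HomGroup G) {H : Set G}

def coset (g : G) (H : Set G) : Set G := (fun h => HG.mul g h) '' H

theorem image_α_coset (h_α : HG.α '' H = H) (g : G) :
    HG.α '' HG.coset g H = HG.coset (HG.α g) H := by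
  rw [coset, coset, ← Set.image_comp]
  conv_rhs => rw [← h_α, ← Set.image_comp]
  exact Set.image_congr fun h _ => HG.α_mul g h

theorem α_α_eq_mul_of_mul_eq {a b ha hb : G} (heq : HG.mul a ha = HG.mul b hb) :
    HG.α (HG.α a) = HG.mul (HG.α b) (HG.mul hb (HG.inv ha)) := by
  have h := HG.hom_assoc a ha (HG.inv ha)
  rwa [HG.mul_inv, HG.mul_one, heq, ← HG.hom_assoc b hb (HG.inv ha)] at h

theorem coset_mul_subset (h_mul : ∀ x ∈ H, ∀ y ∈ H, HG.mul x y ∈ H)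
    (h_α : H ⊆ HG.α '' H) {k : G} (hk : k ∈ H) (g : G) :
    HG.coset (HG.mul g k) H ⊆ HG.coset (HG.α g) H := by
  rintro _ ⟨_, hαc, rfl⟩
  obtain ⟨c, hc, rfl⟩ := h_α hαc
  exact ⟨HG.mul k c, h_mul _ hk _ hc, HG.hom_assoc g k c⟩

theorem coset_α_α_subset_of_mul_eq (h_mul : ∀ x ∈ H, ∀ y ∈ H, HG.mul x y ∈ H)
    (h_inv : ∀ x ∈ H, HG.inv x ∈ H) (h_α : HG.α '' H = H) {a b ha hb : G}
    (haH : ha ∈ H) (hbH : hb ∈ H) (heq : HG.mul a ha = HG.mul b hb) :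
    HG.coset (HG.α (HG.α a)) H ⊆ HG.coset (HG.α (HG.α b)) H := by
  rw [HG.α_α_eq_mul_of_mul_eq heq]
  exact HG.coset_mul_subset h_mul h_α.superset (h_mul _ hbH _ (h_inv _ haH)) _

end HomGroup

theorem homGroup_coset_disjoint_general {G : Type*} (HG : HomGroup G) (H : Set G)
    (h_mul : ∀ x ∈ H, ∀ y ∈ H, HG.mul x y ∈ H)
    (h_inv : ∀ x ∈ H, HG.inv x ∈ H)
    (h_α : HG.α '' H = H) (x y : G)
    (h : (((fun h => HG.mul x h) '' H) ∩ ((fun h => HG.mul y h) '' H)).Nonempty) :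
    (fun h => HG.mul x h) '' H = (fun h => HG.mul y h) '' H := by
  obtain ⟨z, ⟨h₁, h₁H, hz₁⟩, ⟨h₂, h₂H, hz₂⟩⟩ := h
  have heq : HG.mul x h₁ = HG.mul y h₂ := hz₁.trans hz₂.symm
  have image_α_injective : Function.Injective (Set.image HG.α) :=
    Set.image_injective.mpr HG.α.injective
  change HG.coset x H = HG.coset y H
  apply image_α_injective
  apply image_α_injective
  rw [HG.image_α_coset h_α, HG.image_α_coset h_α, HG.image_α_coset h_α,
    HG.image_α_coset h_α]
  exact (HG.coset_α_α_subset_of_mul_eq h_mul h_inv h_α h₁H h₂H heq).antisymm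
    (HG.coset_α_α_subset_of_mul_eq h_mul h_inv h_α h₂H h₁H heq.symm)

/-- Two left cosets of a Hom-subgroup that intersect are equal. -/
theorem homGroup_coset_disjoint {G : Type*} (HG : HomGroup G) (H : Set G)
    (h_one : HG.one ∈ H)
    (h_mul : ∀ x ∈ H, ∀ y ∈ H, HG.mul x y ∈ H)
    (h_inv : ∀ x ∈ H, HG.inv x ∈ H)
    (h_α : HG.α '' H = H) (x y : G)
    (h : (((fun h => HG.mul x h) '' H) ∩ ((fun h => HG.mul y h) '' H)).Nonempty) :
    (fun h => HG.mul x h) '' H = (fun h => HG.mul y h) '' H :=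
  homGroup_coset_disjoint_general HG H h_mul h_inv h_α x y h
end

section
/- Let (G, α) be a Hom-group and H a Hom-subgroup with α(H) = H. The left cosets of H form a partition of G: every element of G lies in some coset xH, and distinct cosets are disjoint. -/
/-- The left cosets of a Hom-subgroup partition the Hom-group: every element lies
in some coset (indeed `g ∈ α⁻¹(g)·H`), and cosets that intersect coincide. -/
theorem homGroup_coset_partition {G : Type*} (HG : HomGroup G) (H : Set G)
    (h_one : HG.one ∈ H)
    (h_mul : ∀ x ∈ H, ∀ y ∈ H, HG.mul x y ∈ H)
    (h_inv : ∀ x ∈ H, HG.inv x ∈ H)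
    (h_α : HG.α '' H = H) :
    (∀ g : G, g ∈ (fun h => HG.mul (HG.α.symm g) h) '' H) ∧
    (∀ x y : G, (((fun h => HG.mul x h) '' H) ∩ ((fun h => HG.mul y h) '' H)).Nonempty →
      (fun h => HG.mul x h) '' H = (fun h => HG.mul y h) '' H) := by
  -- membership is preserved by α in both directions
  have hmem : ∀ x : G, x ∈ H ↔ HG.α x ∈ H := by
    intro x
    constructor
    · intro hx
      rw [← h_α]; exact ⟨x, hx, rfl⟩
    · intro hx
      conv at hx => rw [← h_α]
      obtain ⟨y, hy, hxy⟩ := hx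
      rwa [← HG.α.injective hxy]
  have hmem' : ∀ x : G, HG.α.symm x ∈ H ↔ x ∈ H := by
    intro x
    rw [hmem (HG.α.symm x), HG.α.apply_symm_apply]
  -- key lemma: if the cosets of x and y meet, then xH ⊆ yH
  have key : ∀ x y h₁ h₂ : G, h₁ ∈ H → h₂ ∈ H → HG.mul x h₁ = HG.mul y h₂ →
      (fun h => HG.mul x h) '' H ⊆ (fun h => HG.mul y h) '' H := by
    intro x y h₁ h₂ hh₁ hh₂ heq
    set z := HG.mul (HG.inv y) x with hz
    have e1 : HG.mul z (HG.α h₁) = HG.α (HG.α h₂) := by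
      have a := HG.hom_assoc (HG.inv y) x h₁
      have b := HG.hom_assoc (HG.inv y) y h₂
      rw [HG.inv_mul, HG.one_mul] at b
      rw [heq, b] at a
      exact a.symm
    have e2 : HG.α (HG.α z) = HG.mul (HG.α (HG.α h₂)) (HG.α (HG.α (HG.inv h₁))) := by
      have a := HG.hom_assoc z (HG.α h₁) (HG.α (HG.inv h₁))
      rw [← HG.α_mul, HG.mul_inv, HG.α_one, HG.mul_one, e1] at a
      exact a
    have hzH : z ∈ H := by
      rw [hmem z, hmem (HG.α z), e2]
      exact h_mul _ ((hmem _).mp ((hmem _).mp hh₂)) _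
        ((hmem _).mp ((hmem _).mp (h_inv _ hh₁)))
    set w := HG.α.symm z with hw
    have hwH : w ∈ H := (hmem' z).mpr hzH
    have hxyw : HG.mul y w = HG.α x := by
      apply HG.α.injective
      rw [HG.α_mul, HG.α.apply_symm_apply]
      have a := HG.hom_assoc y (HG.inv y) x
      rw [HG.mul_inv, HG.one_mul] at a
      exact a
    rintro _ ⟨h, hh, rfl⟩
    refine ⟨HG.α.symm (HG.mul w h), (hmem' _).mpr (h_mul _ hwH _ hh), ?_⟩
    apply HG.α.injective
    simp only
    rw [HG.α_mul, HG.α_mul, HG.α.apply_symm_apply, ← hxyw]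
    exact HG.hom_assoc y w h
  constructor
  · intro g
    exact ⟨HG.one, h_one, by simp [HG.mul_one]⟩
  · rintro x y ⟨g, ⟨h₁, hh₁, hg₁⟩, ⟨h₂, hh₂, hg₂⟩⟩
    simp only at hg₁ hg₂
    have heq : HG.mul x h₁ = HG.mul y h₂ := by rw [hg₁, hg₂]
    exact Set.Subset.antisymm (key x y h₁ h₂ hh₁ hh₂ heq) (key y x h₂ h₁ hh₂ hh₁ heq.symm)
end

section
/- Lagrange's theorem for Hom-groups: if (G, α) is a finite Hom-group and H is a Hom-subgroup of G, then the cardinality of H divides the cardinality of G. -/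
/-!
Untwisting the product of a Hom-group, `a ⋆ b := α⁻¹ (a b)`, gives an honest group structure on
the same carrier: Hom-associativity becomes associativity after applying `α`, and Hom-unitality
makes `1` a genuine unit. A Hom-subgroup is stable under `α⁻¹` because `α '' H = H`, hence closed
under `⋆`, so it is a subgroup of the untwisted group and ordinary Lagrange applies.
-/

theorem Equiv.symm_apply_mem_of_image_eq {G : Type*} (e : G ≃ G) {H : Set G} (h : e '' H = H)
    {x : G} (hx : x ∈ H) : e.symm x ∈ H := by
  rw [← h, Equiv.image_eq_preimage_symm] at hx
  exact hx

namespace HomGroup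

variable {G : Type*}

abbrev toGroup (HG : HomGroup G) : Group G :=
  letI : Mul G := ⟨fun a b => HG.α.symm (HG.mul a b)⟩
  letI : One G := ⟨HG.one⟩
  letI : Inv G := ⟨HG.inv⟩
  Group.ofLeftAxioms
    (fun a b c => by
      show HG.α.symm (HG.mul (HG.α.symm (HG.mul a b)) c)
          = HG.α.symm (HG.mul a (HG.α.symm (HG.mul b c)))
      congr 1
      apply HG.α.injective
      rw [HG.α_mul, HG.α_mul, Equiv.apply_symm_apply, Equiv.apply_symm_apply]
      exact (HG.hom_assoc a b c).symm)
    (fun a => by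
      show HG.α.symm (HG.mul HG.one a) = a
      rw [HG.one_mul, Equiv.symm_apply_apply])
    (fun a => by
      show HG.α.symm (HG.mul (HG.inv a) a) = HG.one
      rw [HG.inv_mul, Equiv.symm_apply_eq, HG.α_one])

def toSubgroup (HG : HomGroup G) (H : Set G)
    (h_one : HG.one ∈ H)
    (h_mul : ∀ x ∈ H, ∀ y ∈ H, HG.mul x y ∈ H)
    (h_inv : ∀ x ∈ H, HG.inv x ∈ H)
    (h_α : HG.α '' H = H) :
    @Subgroup G HG.toGroup :=
  letI := HG.toGroup
  { carrier := H
    mul_mem' := fun {a b} ha hb => HG.α.symm_apply_mem_of_image_eq h_α (h_mul a ha b hb)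
    one_mem' := h_one
    inv_mem' := fun {a} ha => h_inv a ha }

end HomGroup

theorem homGroup_lagrange_general {G : Type*} (HG : HomGroup G) (H : Set G)
    (h_one : HG.one ∈ H)
    (h_mul : ∀ x ∈ H, ∀ y ∈ H, HG.mul x y ∈ H)
    (h_inv : ∀ x ∈ H, HG.inv x ∈ H)
    (h_α : HG.α '' H = H) :
    Set.ncard H ∣ Nat.card G := by
  let _ := HG.toGroup
  have := Subgroup.card_subgroup_dvd_card (HG.toSubgroup H h_one h_mul h_inv h_α)
  rwa [← Nat.card_coe_set_eq]

/-- Lagrange's theorem for Hom-groups: the cardinality of a Hom-subgroup of a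
finite Hom-group divides the cardinality of the Hom-group. -/
theorem homGroup_lagrange {G : Type*} [Finite G] (HG : HomGroup G) (H : Set G)
    (h_one : HG.one ∈ H)
    (h_mul : ∀ x ∈ H, ∀ y ∈ H, HG.mul x y ∈ H)
    (h_inv : ∀ x ∈ H, HG.inv x ∈ H)
    (h_α : HG.α '' H = H) :
    Set.ncard H ∣ Nat.card G :=
  homGroup_lagrange_general HG H h_one h_mul h_inv h_α
end

section
/- In a Hom-group (G, α), the element 1 is idempotent (1·1 = 1), and the Hom-group is a loop (i.e. 1 is a two-sided identity: 1x = x1 = x for all x) if and only if α is the identity map, in which case G is a group. -/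
namespace HomGroup

variable {G : Type*} (H : HomGroup G)

theorem one_mul_one : H.mul H.one H.one = H.one := by
  rw [H.mul_one, H.α_one]

theorem α_eq_self_of_one_mul_eq_self {x : G} (hx : H.mul H.one x = x) : H.α x = x := by
  rw [← H.one_mul, hx]

theorem isUnital_iff_α_eq_id :
    (∀ x, H.mul H.one x = x ∧ H.mul x H.one = x) ↔ ∀ x, H.α x = x :=
  ⟨fun h x => H.α_eq_self_of_one_mul_eq_self (h x).1,
    fun h x => ⟨by rw [H.one_mul, h], by rw [H.mul_one, h]⟩⟩

theorem mul_assoc_of_α_eq_id (h : ∀ x, H.α x = x) (a b c : G) :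
    H.mul (H.mul a b) c = H.mul a (H.mul b c) := by
  simpa only [h] using (H.hom_assoc a b c).symm

end HomGroup

/-- In a Hom-group, `1` is idempotent, and `1` is a two-sided identity (i.e. the
Hom-group is a loop) iff `α` is the identity map, in which case the multiplication
is associative, so `G` is a group. -/
theorem homGroup_loop_iff_group {G : Type*} (H : HomGroup G) :
    H.mul H.one H.one = H.one ∧
    ((∀ x, H.mul H.one x = x ∧ H.mul x H.one = x) ↔ ∀ x, H.α x = x) ∧
    ((∀ x, H.α x = x) → ∀ a b c, H.mul (H.mul a b) c = H.mul a (H.mul b c)) :=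
  ⟨H.one_mul_one, H.isUnital_iff_α_eq_id, H.mul_assoc_of_α_eq_id⟩
end

section
/- There is, up to isomorphism, exactly one Hom-group of order 3 with twisting map not equal to the identity: on G = {1, a, b} the multiplication must be 1·1=1, 1·a=a·1=b, 1·b=b·1=a, a·a=a, a·b=b·a=1, b·b=b, with α(a)=b, α(b)=a; and this structure indeed satisfies all Hom-group axioms. -/
/-- The multiplication table of the unique Hom-group of order 3 with nontrivial
twisting map, on `{1, a, b}` encoded as `{0, 1, 2} = Fin 3`:
`1·1=1, 1·a=a·1=b, 1·b=b·1=a, a·a=a, a·b=b·a=1, b·b=b`. -/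
def homGroup3Mul : Fin 3 → Fin 3 → Fin 3
  | 0, 0 => 0 | 0, 1 => 2 | 0, 2 => 1
  | 1, 0 => 2 | 1, 1 => 1 | 1, 2 => 0
  | 2, 0 => 1 | 2, 1 => 0 | 2, 2 => 2

/-- The twisting map of the unique Hom-group of order 3 with nontrivial twisting:
`α(1)=1, α(a)=b, α(b)=a`. -/
def homGroup3Alpha : Fin 3 → Fin 3
  | 0 => 0 | 1 => 2 | 2 => 1

/-!
Since `α` is a bijection fixing `1`, a nontrivial `α` on a three-element Hom-group
`{1, a, α a}` must swap `a` and `α a`. Hom-unitality fixes the first row and column of the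
multiplication table (`g 1 = 1 g = α g`), and among the `3 ^ 4` fillings of the remaining
`2 × 2` block only one is Hom-associative with right inverses.
-/

namespace HomGroup

variable {G : Type*} (H : HomGroup G)

lemma ne_one_of_α_apply_ne {a : G} (ha : H.α a ≠ a) : a ≠ H.one := by
  rintro rfl
  exact ha H.α_one

lemma α_apply_ne_one_of_α_apply_ne {a : G} (ha : H.α a ≠ a) : H.α a ≠ H.one := by
  rw [← H.α_one, H.α.injective.ne_iff]
  exact H.ne_one_of_α_apply_ne ha

lemma exists_equiv_fin_three [Fintype G] (hcard : Fintype.card G = 3) {a : G}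
    (ha : H.α a ≠ a) : ∃ E : Fin 3 ≃ G, E 0 = H.one ∧ E 1 = a ∧ E 2 = H.α a := by
  have hinj : Function.Injective ![H.one, a, H.α a] := by
    rw [Matrix.vecCons, Fin.cons_injective_iff]
    simp [(H.ne_one_of_α_apply_ne ha).symm, (H.α_apply_ne_one_of_α_apply_ne ha).symm, ha.symm]
  have hbij := (Fintype.bijective_iff_injective_and_card _).mpr ⟨hinj, by simp [hcard]⟩
  exact ⟨Equiv.ofBijective _ hbij, rfl, rfl, rfl⟩

end HomGroup

def Equiv.homGroup {G G' : Type*} (e : G' ≃ G) (H : HomGroup G) : HomGroup G' where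
  mul x y := e.symm (H.mul (e x) (e y))
  one := e.symm H.one
  α := e.trans (H.α.trans e.symm)
  hom_assoc g h k := by simp [H.hom_assoc]
  α_mul g k := by simp [H.α_mul]
  mul_one g := by simp [H.mul_one]
  one_mul g := by simp [H.one_mul]
  α_one := by simp [H.α_one]
  inv x := e.symm (H.inv (e x))
  mul_inv g := by simp [H.mul_inv]
  inv_mul g := by simp [H.inv_mul]

lemma homGroup3Alpha_involutive : Function.Involutive homGroup3Alpha := by
  unfold Function.Involutive
  decide

def homGroup3 : HomGroup (Fin 3) where
  mul := homGroup3Mul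
  one := 0
  α := homGroup3Alpha_involutive.toPerm
  hom_assoc := by decide
  α_mul := by decide
  mul_one := by decide
  one_mul := by decide
  α_one := by decide
  inv := homGroup3Alpha
  mul_inv := by decide
  inv_mul := by decide

lemma Equiv.Perm.apply_eq_homGroup3Alpha (σ : Equiv.Perm (Fin 3)) (h0 : σ 0 = 0)
    (h1 : σ 1 = 2) (x : Fin 3) : σ x = homGroup3Alpha x := by
  revert σ x
  decide

def unitalTable3 (p q r s : Fin 3) : Fin 3 → Fin 3 → Fin 3
  | 0, 0 => 0 | 0, 1 => 2 | 0, 2 => 1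
  | 1, 0 => 2 | 1, 1 => p | 1, 2 => q
  | 2, 0 => 1 | 2, 1 => r | 2, 2 => s

lemma unitalTable3_eq_homGroup3Mul : ∀ p q r s : Fin 3,
    (∀ g h k, unitalTable3 p q r s (homGroup3Alpha g) (unitalTable3 p q r s h k) =
      unitalTable3 p q r s (unitalTable3 p q r s g h) (homGroup3Alpha k)) →
    (∀ g, ∃ h, unitalTable3 p q r s g h = 0) →
    ∀ x y, unitalTable3 p q r s x y = homGroup3Mul x y := by
  decide

namespace HomGroup

variable (K : HomGroup (Fin 3)) (hone : K.one = 0) (hα : ∀ x, K.α x = homGroup3Alpha x)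
include hone hα

lemma mul_eq_unitalTable3 (x y : Fin 3) :
    K.mul x y = unitalTable3 (K.mul 1 1) (K.mul 1 2) (K.mul 2 1) (K.mul 2 2) x y := by
  have hright (g : Fin 3) : K.mul g 0 = homGroup3Alpha g := by rw [← hone, K.mul_one, hα]
  have hleft (g : Fin 3) : K.mul 0 g = homGroup3Alpha g := by rw [← hone, K.one_mul, hα]
  fin_cases x <;> fin_cases y <;> simp [unitalTable3, hright, hleft, homGroup3Alpha]

lemma mul_eq_homGroup3Mul (x y : Fin 3) : K.mul x y = homGroup3Mul x y := by
  have htable := K.mul_eq_unitalTable3 hone hα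
  refine htable x y ▸ unitalTable3_eq_homGroup3Mul _ _ _ _ (fun g h k => ?_) (fun g => ?_) x y
  · simpa only [← htable, ← hα] using K.hom_assoc g h k
  · exact ⟨K.inv g, by rw [← htable, K.mul_inv, hone]⟩

end HomGroup

/-- Up to isomorphism there is exactly one Hom-group of order 3 whose twisting map
is not the identity: the table `homGroup3Mul` with twisting `homGroup3Alpha` does
define a Hom-group, and any Hom-group of order 3 with nontrivial twisting map is
isomorphic to it. -/
theorem homGroup_order_three_classification :
    (∃ K : HomGroup (Fin 3), K.one = 0 ∧ (∀ x y, K.mul x y = homGroup3Mul x y) ∧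
      (∀ x, K.α x = homGroup3Alpha x)) ∧
    (∀ (G : Type) [Fintype G] (H : HomGroup G), Fintype.card G = 3 →
      H.α ≠ Equiv.refl G →
      ∃ f : G ≃ Fin 3, f H.one = 0 ∧
        (∀ x y, f (H.mul x y) = homGroup3Mul (f x) (f y)) ∧
        (∀ x, f (H.α x) = homGroup3Alpha (f x))) := by
  refine ⟨⟨homGroup3, rfl, fun _ _ => rfl, fun _ => rfl⟩, fun G _ H hcard hα => ?_⟩
  obtain ⟨a, ha⟩ : ∃ a, H.α a ≠ a := not_forall.mp fun h => hα (Equiv.ext h)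
  obtain ⟨E, hE0, hE1, hE2⟩ := H.exists_equiv_fin_three hcard ha
  let K := E.homGroup H
  have hKone : K.one = 0 := by simp [K, Equiv.homGroup, ← hE0]
  have hKα : ∀ x, K.α x = homGroup3Alpha x :=
    Equiv.Perm.apply_eq_homGroup3Alpha K.α
      (show E.symm (H.α (E 0)) = 0 by rw [hE0, H.α_one, ← hE0, E.symm_apply_apply])
      (show E.symm (H.α (E 1)) = 2 by rw [hE1, ← hE2, E.symm_apply_apply])
  refine ⟨E.symm, by simp [← hE0], fun x y => ?_, fun x => ?_⟩
  · simpa [K, Equiv.homGroup] using K.mul_eq_homGroup3Mul hKone hKα (E.symm x) (E.symm y)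
  · simpa [K, Equiv.homGroup] using hKα (E.symm x)
end
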